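/- arXiv:1011.0355 — 5 statements merged into one kernel-verified Lean document; each statement's English description precedes it below -/
import Mathlib

section
/- Let (F_i)_{i∈ℤ} be independent random variables, all with the same distribution as R, and define the event 𝒱 = ⋂_{n≥0} ⋃_{j≥0} {F_{n−j} ≥ j+1}. If R has finite expectation (equivalently, ∑_{n=1}^{∞} P(R ≥ n) < ∞), then P(𝒱) = 0. -/
open MeasureTheory ProbabilityTheory Filter Topology Finset
open scoped ENNReal

/-!
Cut `ℕ` into blocks of `K + 1` consecutive vertices. The right end of a block is reached either
from inside its block or from a vertex at distance `> K`. The first event fails with probability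
`∏_{j ≤ K} P(R ≤ j)`, which `P(R = 0) > 0` and `∑ P(R > j) < ∞` bound below by some `c > 0`
uniformly in `K`, and these failures are independent across blocks; the second event has
probability at most `∑_{j > K} P(R > j)`. So `P(𝒱) ≤ (1 - c)^N + N ∑_{j > K} P(R > j)` for all
`N` and all large `K`; let `K → ∞`, then `N → ∞`.
-/

namespace ENNReal

lemma one_sub_add_le_mul_one_sub (a b : ℝ≥0∞) : 1 - (a + b) ≤ (1 - a) * (1 - b) :=
  calc 1 - (a + b) = 1 - a - b := tsub_add_eq_tsub_tsub _ _ _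
    _ ≤ (1 - a) - (1 - a) * b := tsub_le_tsub_left (mul_le_of_le_one_left' tsub_le_self) _
    _ = (1 - a) * (1 - b) := by
      rw [ENNReal.mul_sub fun _ _ => ENNReal.sub_ne_top ENNReal.one_ne_top, mul_one]

lemma one_sub_sum_le_prod_one_sub {ι : Type*} (s : Finset ι) (x : ι → ℝ≥0∞) :
    1 - ∑ i ∈ s, x i ≤ ∏ i ∈ s, (1 - x i) := by
  classical
  induction s using Finset.induction_on with
  | empty => simp
  | insert a s ha ih =>
    rw [sum_insert ha, prod_insert ha]
    exact (one_sub_add_le_mul_one_sub _ _).trans (by gcongr)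

lemma pow_mul_one_sub_tsum_le_prod_one_sub {x : ℕ → ℝ≥0∞} {p : ℝ≥0∞} (hp : ∀ j, p ≤ 1 - x j)
    {M K : ℕ} (hMK : M ≤ K) : p ^ M * (1 - ∑' j, x (j + M)) ≤ ∏ j ∈ range K, (1 - x j) := by
  rw [← prod_range_mul_prod_Ico _ hMK]
  gcongr
  · simpa using prod_le_prod' fun j (_ : j ∈ range M) => hp j
  · refine le_trans (tsub_le_tsub_left ?_ 1) (one_sub_sum_le_prod_one_sub _ _)
    rw [sum_Ico_eq_sum_range]
    simpa only [add_comm M] using ENNReal.sum_le_tsum (range (K - M)) (f := fun j => x (j + M))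

lemma eq_zero_of_le_pow_add_mul {x a : ℝ≥0∞} {τ : ℕ → ℝ≥0∞} (ha : a < 1)
    (hτ : Tendsto τ atTop (𝓝 0)) (h : ∀ N : ℕ, ∀ᶠ K in atTop, x ≤ a ^ N + N * τ K) : x = 0 := by
  have hN : ∀ N : ℕ, x ≤ a ^ N := fun N => by
    have : Tendsto (fun K => a ^ N + N * τ K) atTop (𝓝 (a ^ N)) := by
      simpa using (ENNReal.Tendsto.const_mul hτ (.inr (natCast_ne_top N))).const_add (a ^ N)
    exact ge_of_tendsto this (h N)
  exact nonpos_iff_eq_zero.mp <|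
    ge_of_tendsto (tendsto_pow_atTop_nhds_zero_of_lt_one ha) (.of_forall hN)

end ENNReal

section Independence

variable {Ω : Type*} [MeasurableSpace Ω] {P : Measure Ω}

lemma ProbabilityTheory.iIndepFun.iIndepSet_iInter_preimage {κ ι β : Type*} [Fintype ι]
    [MeasurableSpace β] {X : κ × ι → Ω → β} (hX : iIndepFun X P) (hXm : ∀ p, Measurable (X p))
    {t : κ × ι → Set β} (ht : ∀ p, MeasurableSet (t p)) :
    iIndepSet (fun k => ⋂ j, X (k, j) ⁻¹' t (k, j)) P := by
  refine (iIndepSet_iff_meas_biInter fun k => .iInter fun j => hXm _ (ht _)).2 fun u => ?_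
  have hrows : ∀ v : Finset κ, P (⋂ k ∈ v, ⋂ j, X (k, j) ⁻¹' t (k, j)) =
      ∏ k ∈ v, ∏ j, P (X (k, j) ⁻¹' t (k, j)) := fun v => by
    rw [← prod_product', ← hX.measure_inter_preimage_eq_mul _ fun p _ => ht p]
    congr 1
    ext ω
    simp only [Set.mem_iInter, Set.mem_preimage, mem_product, mem_univ, and_true]
    exact ⟨fun h p hp => h p.1 hp p.2, fun h k hk j => h (k, j) hk⟩
  rw [hrows]
  refine prod_congr rfl fun k _ => ?_
  simpa using (hrows {k}).symm

lemma ProbabilityTheory.iIndepSet.measure_biInter_compl {ι : Type*} {A : ι → Set Ω}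
    (h : iIndepSet A P) (s : Finset ι) : P (⋂ i ∈ s, (A i)ᶜ) = ∏ i ∈ s, P (A i)ᶜ :=
  (iIndepSet_iff _ _).1 h s fun _ _ =>
    (MeasurableSpace.measurableSet_generateFrom (Set.mem_singleton _)).compl

end Independence

namespace Firework

variable {Ω : Type*} {F : ℤ → Ω → ℕ}

def unreachedFromBlock (F : ℤ → Ω → ℕ) (n : ℤ) (K : ℕ) : Set Ω :=
  ⋂ j : Fin (K + 1), {ω | F (n - j) ω ≤ j}

-- `j + (K + 1)` runs over the distances `> K`.
def reachedFromFar (F : ℤ → Ω → ℕ) (n : ℤ) (K : ℕ) : Set Ω :=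
  ⋃ j : ℕ, {ω | j + (K + 1) + 1 ≤ F (n - ↑(j + (K + 1))) ω}

lemma iUnion_reached_subset (n : ℤ) (K : ℕ) :
    ⋃ j : ℕ, {ω | j + 1 ≤ F (n - j) ω} ⊆ (unreachedFromBlock F n K)ᶜ ∪ reachedFromFar F n K := by
  rintro ω ⟨_, ⟨j, rfl⟩, hj⟩
  rcases le_or_gt j K with hjK | hjK
  · refine .inl fun hω => ?_
    have := Set.mem_iInter.1 hω ⟨j, Nat.lt_succ_of_le hjK⟩
    simp only [Set.mem_ofPred_eq] at this hj
    omega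
  · refine .inr (Set.mem_iUnion.2 ⟨j - (K + 1), ?_⟩)
    rwa [Nat.sub_add_cancel hjK]

variable [MeasurableSpace Ω] {P : Measure Ω}

lemma measurableSet_unreachedFromBlock (hmeas : ∀ i, Measurable (F i)) (n : ℤ) (K : ℕ) :
    MeasurableSet (unreachedFromBlock F n K) :=
  .iInter fun j => hmeas _ (t := {x | x ≤ (j : ℕ)}) trivial

lemma measure_reachedFromFar_le {R₀ : Ω → ℕ} (hid : ∀ i, IdentDistrib (F i) R₀ P P)
    (n : ℤ) (K : ℕ) : P (reachedFromFar F n K) ≤ ∑' j : ℕ, P {ω | j + (K + 1) + 1 ≤ R₀ ω} :=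
  (measure_iUnion_le _).trans <| ENNReal.tsum_le_tsum fun j =>
    ((hid _).measure_mem_eq (s := {x | j + (K + 1) + 1 ≤ x}) trivial).le

lemma measure_unreachedFromBlock {R₀ : Ω → ℕ} (hindep : iIndepFun F P)
    (hid : ∀ i, IdentDistrib (F i) R₀ P P) (n : ℤ) (K : ℕ) :
    P (unreachedFromBlock F n K) = ∏ j ∈ range (K + 1), P {ω | R₀ ω ≤ j} := by
  have hinj : Function.Injective fun j : Fin (K + 1) => n - j := fun j j' h => by
    simpa [Fin.val_inj] using h
  have := (hindep.precomp hinj).measure_inter_preimage_eq_mul univ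
    (sets := fun j => {x | x ≤ (j : ℕ)}) fun _ _ => trivial
  simp only [mem_univ, Set.iInter_true] at this
  rw [unreachedFromBlock, ← Fin.prod_univ_eq_prod_range]
  refine this.trans (prod_congr rfl fun j _ => ?_)
  exact (hid _).measure_mem_eq (s := {x | x ≤ (j : ℕ)}) trivial

lemma injective_blockIndex (K : ℕ) :
    Function.Injective fun p : ℕ × Fin (K + 1) => ((p.1 * (K + 1) + K : ℕ) : ℤ) - p.2 := by
  rintro ⟨k, j, hj⟩ ⟨k', j', hj'⟩ h
  simp only [Nat.cast_add, Nat.cast_mul, Nat.cast_one] at h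
  obtain rfl : k = k' := by
    by_contra hne
    rcases Nat.lt_or_gt_of_ne hne with hlt | hlt <;>
      nlinarith [Nat.mul_le_mul_right (K + 1) hlt]
  simp only [Prod.mk.injEq, Fin.mk.injEq, true_and]
  omega

lemma iIndepSet_unreachedFromBlock (hindep : iIndepFun F P) (hmeas : ∀ i, Measurable (F i))
    (K : ℕ) : iIndepSet (fun k : ℕ => unreachedFromBlock F (k * (K + 1) + K : ℕ) K) P :=
  (hindep.precomp (injective_blockIndex K)).iIndepSet_iInter_preimage (fun _ => hmeas _)
    (t := fun p => {x | x ≤ (p.2 : ℕ)}) fun _ => trivial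

lemma measure_survival_le_pow_add_mul {R₀ : Ω → ℕ} (hindep : iIndepFun F P)
    (hmeas : ∀ i, Measurable (F i)) (hid : ∀ i, IdentDistrib (F i) R₀ P P) {c : ℝ≥0∞} (K N : ℕ)
    (hc : c ≤ ∏ j ∈ range (K + 1), P {ω | R₀ ω ≤ j}) :
    P (⋂ n : ℕ, ⋃ j : ℕ, {ω | j + 1 ≤ F (n - j) ω}) ≤
      (1 - c) ^ N + N * ∑' j : ℕ, P {ω | j + (K + 1) + 1 ≤ R₀ ω} := by
  set A : ℕ → Set Ω := fun k => unreachedFromBlock F (k * (K + 1) + K : ℕ) K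
  set U : ℕ → Set Ω := fun k => reachedFromFar F (k * (K + 1) + K : ℕ) K
  have hsub : ⋂ n : ℕ, ⋃ j : ℕ, {ω | j + 1 ≤ F (n - j) ω} ⊆
      (⋂ k ∈ range N, (A k)ᶜ) ∪ ⋃ k ∈ range N, U k := fun ω hω => by
    have hk k := iUnion_reached_subset _ K (Set.mem_iInter.1 hω (k * (K + 1) + K))
    by_cases hU : ω ∈ ⋃ k ∈ range N, U k
    · exact .inr hU
    · refine .inl (Set.mem_iInter₂.2 fun k hkN => (hk k).resolve_right fun hkU => hU ?_)
      exact Set.mem_biUnion hkN hkU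
  have hA k : P (A k)ᶜ ≤ 1 - c := by
    have := hindep.isProbabilityMeasure
    rw [prob_compl_eq_one_sub (measurableSet_unreachedFromBlock hmeas _ K),
      measure_unreachedFromBlock hindep hid]
    exact tsub_le_tsub_left hc 1
  calc P (⋂ n : ℕ, ⋃ j : ℕ, {ω | j + 1 ≤ F (n - j) ω})
      ≤ P (⋂ k ∈ range N, (A k)ᶜ) + P (⋃ k ∈ range N, U k) :=
        (measure_mono hsub).trans (measure_union_le _ _)
    _ ≤ ∏ k ∈ range N, P (A k)ᶜ + ∑ k ∈ range N, P (U k) :=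
        add_le_add ((iIndepSet_unreachedFromBlock hindep hmeas K).measure_biInter_compl _).le
          (measure_biUnion_finset_le _ _)
    _ ≤ ∏ _k ∈ range N, (1 - c) +
          ∑ _k ∈ range N, ∑' j : ℕ, P {ω | j + (K + 1) + 1 ≤ R₀ ω} := by
        gcongr with k _ k _
        · exact hA k
        · exact measure_reachedFromFar_le hid _ K
    _ = (1 - c) ^ N + N * ∑' j : ℕ, P {ω | j + (K + 1) + 1 ≤ R₀ ω} := by simp

end Firework

theorem firework_halfline_death_of_finite_expectation_general
    {Ω : Type*} [MeasurableSpace Ω] (P : Measure Ω) [IsProbabilityMeasure P]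
    (F : ℤ → Ω → ℕ) (R₀ : Ω → ℕ)
    (hmeas : ∀ i, Measurable (F i))
    (hindep : iIndepFun F P)
    (hid : ∀ i, IdentDistrib (F i) R₀ P P)
    (h0 : 0 < P {ω | R₀ ω < 1})
    (𝒱 : Set Ω)
    (h𝒱 : 𝒱 = ⋂ (n : ℕ), ⋃ (j : ℕ), {ω | j + 1 ≤ F ((n : ℤ) - (j : ℤ)) ω})
    (hE : (∑' n : ℕ, P {ω | n + 1 ≤ R₀ ω}) ≠ ⊤) :
    P 𝒱 = 0 := by
  set t : ℕ → ℝ≥0∞ := fun n => P {ω | n + 1 ≤ R₀ ω}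
  have hle j : P {ω | R₀ ω ≤ j} = 1 - t j := by
    refine Eq.trans ?_ (prob_compl_eq_one_sub₀
      ((hid 0).aemeasurable_snd.nullMeasurableSet_preimage (s := {x | j + 1 ≤ x}) trivial))
    congr 1
    exact Set.ext fun ω => by simp only [Set.mem_compl_iff, Set.mem_ofPred_eq]; omega
  have hp j : P {ω | R₀ ω < 1} ≤ 1 - t j :=
    hle j ▸ measure_mono fun ω (hω : R₀ ω < 1) => show R₀ ω ≤ j by omega
  obtain ⟨M, hM⟩ : ∃ M, ∑' i, t (i + M) < 1 :=
    ((ENNReal.tendsto_sum_nat_add t hE).eventually_lt_const one_pos).exists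
  set c := P {ω | R₀ ω < 1} ^ M * (1 - ∑' i, t (i + M))
  have hc : c ≠ 0 := mul_ne_zero (pow_ne_zero _ h0.ne') (tsub_pos_of_lt hM).ne'
  subst h𝒱
  refine ENNReal.eq_zero_of_le_pow_add_mul (ENNReal.sub_lt_self ENNReal.one_ne_top one_ne_zero hc)
    ((ENNReal.tendsto_sum_nat_add t hE).comp (tendsto_add_atTop_nat 1)) fun N => ?_
  filter_upwards [eventually_ge_atTop M] with K hK
  refine Firework.measure_survival_le_pow_add_mul hindep hmeas hid K N ?_
  simp only [hle]
  exact ENNReal.pow_mul_one_sub_tsum_le_prod_one_sub hp (by omega)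

/-- **Firework Process on ℤ with all vertices `i ≤ 0` initially active.**
With `𝒱 = ⋂_{n≥0} ⋃_{j≥0} {F_{n-j} ≥ j+1}`, if `R` has finite expectation,
i.e. `∑_{n=1}^∞ P(R ≥ n) < ∞`, then `P(𝒱) = 0`. -/
theorem firework_halfline_death_of_finite_expectation
    {Ω : Type*} [MeasurableSpace Ω] (P : Measure Ω) [IsProbabilityMeasure P]
    (F : ℤ → Ω → ℕ) (R₀ : Ω → ℕ)
    (hmeas : ∀ i, Measurable (F i)) (hmeas₀ : Measurable R₀)
    (hindep : iIndepFun F P)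
    (hid : ∀ i, IdentDistrib (F i) R₀ P P)
    (h0 : 0 < P {ω | R₀ ω < 1}) (h1 : P {ω | R₀ ω < 1} < 1)
    (𝒱 : Set Ω)
    (h𝒱 : 𝒱 = ⋂ (n : ℕ), ⋃ (j : ℕ), {ω | j + 1 ≤ F ((n : ℤ) - (j : ℤ)) ω})
    (hE : (∑' n : ℕ, P {ω | n + 1 ≤ R₀ ω}) ≠ ⊤) :
    P 𝒱 = 0 :=
  firework_halfline_death_of_finite_expectation_general P F R₀ hmeas hindep hid h0 𝒱 h𝒱 hE
end

section
/- For the heterogeneous Reverse Firework Process, ∑_{k=1}^{∞} P(R_{n+k} ≥ k) = ∞ for every n ∈ ℕ if and only if P(S) = 1. -/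
open MeasureTheory ProbabilityTheory Filter
open scoped ENNReal

/-!
Write `E n k = {k + 1 ≤ R (n + (k + 1))}`, so that `S = ⋂ n, ⋃ k, E n k` and, for fixed `n`,
the events `E n k` are independent with `P (E n k) ≤ 1 - P (R (n + (k + 1)) < 1) < 1`.
Hence `P S = 1` iff `P (⋃ k, E n k) = 1` for every `n`. For independent events of probability
`< 1`, the union has full measure iff the probabilities sum to `∞`: one direction is the second
Borel–Cantelli lemma; conversely, if the sum is finite, some tail of total mass `< 1` is avoided
with positive probability, as is each of the finitely many remaining events, and independence
multiplies these positive probabilities.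
-/

namespace ProbabilityTheory

variable {Ω ι : Type*} [MeasurableSpace Ω] {μ : Measure Ω}

lemma measure_iInter_eq_one_iff [IsProbabilityMeasure μ] [Countable ι] {s : ι → Set Ω}
    (hs : ∀ i, MeasurableSet (s i)) : μ (⋂ i, s i) = 1 ↔ ∀ i, μ (s i) = 1 := by
  rw [← prob_compl_eq_zero_iff (.iInter hs), Set.compl_iInter, measure_iUnion_null_iff]
  simp_rw [prob_compl_eq_zero_iff (hs _)]

lemma iIndepFun.iIndepSet_preimage {β : ι → Type*} [∀ i, MeasurableSpace (β i)]
    {f : ∀ i, Ω → β i} (hf : iIndepFun f μ) (hfm : ∀ i, Measurable (f i))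
    {A : ∀ i, Set (β i)} (hA : ∀ i, MeasurableSet (A i)) :
    iIndepSet (fun i ↦ f i ⁻¹' A i) μ :=
  (iIndepSet_iff_meas_biInter fun i ↦ hfm i (hA i)).2 fun s ↦
    hf.measure_inter_preimage_eq_mul s fun i _ ↦ hA i

lemma iIndepSet.compl {s : ι → Set Ω} (hs : iIndepSet s μ) : iIndepSet (fun i ↦ (s i)ᶜ) μ := by
  have hgen (t : Set Ω) : MeasurableSpace.generateFrom {tᶜ} = .generateFrom {t} := by
    refine le_antisymm (MeasurableSpace.generateFrom_le ?_) (MeasurableSpace.generateFrom_le ?_)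
    · intro u hu
      rw [Set.mem_singleton_iff.1 hu]
      exact (MeasurableSpace.measurableSet_generateFrom (Set.mem_singleton t)).compl
    · intro u hu
      rw [Set.mem_singleton_iff.1 hu]
      simpa only [compl_compl] using
        (MeasurableSpace.measurableSet_generateFrom (Set.mem_singleton tᶜ)).compl
  rw [iIndepSet_iff_iIndep] at hs ⊢
  simpa only [hgen] using hs

lemma iIndepSet.measure_iInter_eq_mul {s : ℕ → Set Ω} (hsm : ∀ i, MeasurableSet (s i))
    (hs : iIndepSet s μ) (J : ℕ) :
    μ (⋂ i, s i) = μ (⋂ i ∈ Finset.range J, s i) * μ (⋂ i, s (i + J)) := by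
  have hsplit : ⋂ i, s i = (⋂ i ∈ Finset.range J, s i) ∩ ⋂ i, s (i + J) := by
    ext ω
    simp only [Set.mem_iInter, Set.mem_inter_iff, Finset.mem_range]
    refine ⟨fun h ↦ ⟨fun i _ ↦ h i, fun i ↦ h (i + J)⟩, fun ⟨hlt, hge⟩ i ↦ ?_⟩
    rcases lt_or_ge i J with hi | hi
    · exact hlt i hi
    · simpa [Nat.sub_add_cancel hi] using hge (i - J)
  have hblocks := hs.indep_generateFrom_of_disjoint hsm {i | i < J} {i | J ≤ i}
    (Set.disjoint_left.2 fun i (hlt : i < J) (hge : J ≤ i) ↦ (hlt.not_ge hge).elim)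
  rw [hsplit]
  refine (Indep_iff _ _ μ).1 hblocks _ _ ?_ ?_
  · exact .biInter (Set.to_countable _) fun i hi ↦
      MeasurableSpace.measurableSet_generateFrom ⟨i, Finset.mem_range.1 hi, rfl⟩
  · exact .iInter fun i ↦ MeasurableSpace.measurableSet_generateFrom ⟨i + J, by simp, rfl⟩

lemma iIndepSet.measure_iUnion_lt_one [IsProbabilityMeasure μ] {s : ℕ → Set Ω}
    (hsm : ∀ i, MeasurableSet (s i)) (hs : iIndepSet s μ) (hlt : ∀ i, μ (s i) < 1)
    (hsum : ∑' i, μ (s i) ≠ ∞) : μ (⋃ i, s i) < 1 := by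
  obtain ⟨J, hJ⟩ := ((ENNReal.tendsto_sum_nat_add _ hsum).eventually_lt_const one_pos).exists
  have hhead : 0 < μ (⋂ i ∈ Finset.range J, (s i)ᶜ) := by
    rw [hs.compl.meas_biInter, pos_iff_ne_zero, Finset.prod_ne_zero_iff]
    intro i _
    rw [prob_compl_eq_one_sub (hsm i)]
    exact (tsub_pos_of_lt (hlt i)).ne'
  have htail : 0 < μ (⋂ i, (s (i + J))ᶜ) := by
    rw [← Set.compl_iUnion, prob_compl_eq_one_sub (.iUnion fun i ↦ hsm _)]
    exact tsub_pos_of_lt ((measure_iUnion_le _).trans_lt hJ)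
  have hpos : 0 < μ (⋂ i, (s i)ᶜ) := by
    rw [hs.compl.measure_iInter_eq_mul (fun i ↦ (hsm i).compl) J]
    exact ENNReal.mul_pos hhead.ne' htail.ne'
  rwa [← Set.compl_iUnion, prob_compl_eq_one_sub (.iUnion hsm), tsub_pos_iff_lt] at hpos

lemma iIndepSet.measure_iUnion_eq_one_iff [IsProbabilityMeasure μ] {s : ℕ → Set Ω}
    (hsm : ∀ i, MeasurableSet (s i)) (hs : iIndepSet s μ) (hlt : ∀ i, μ (s i) < 1) :
    μ (⋃ i, s i) = 1 ↔ ∑' i, μ (s i) = ∞ := by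
  refine ⟨fun h ↦ by_contra fun hsum ↦ (hs.measure_iUnion_lt_one hsm hlt hsum).ne h,
    fun hsum ↦ le_antisymm prob_le_one ?_⟩
  rw [← measure_limsup_eq_one hsm hs hsum]
  exact measure_mono limsup_le_iSup

end ProbabilityTheory

theorem reverse_firework_heterogeneous_criterion_general
    {Ω : Type*} [MeasurableSpace Ω] (P : Measure Ω) [IsProbabilityMeasure P]
    (R : ℕ → Ω → ℕ)
    (hmeas : ∀ i, Measurable (R i))
    (hindep : iIndepFun R P)
    (h0 : ∀ n, 0 < P {ω | R n ω < 1})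
    (S : Set Ω)
    (hS : S = ⋂ (n : ℕ), ⋃ (j : ℕ) (_ : 1 ≤ j), {ω | j ≤ R (n + j) ω}) :
    (∀ n : ℕ, (∑' k : ℕ, P {ω | k + 1 ≤ R (n + (k + 1)) ω}) = ⊤) ↔ P S = 1 := by
  set E : ℕ → ℕ → Set Ω := fun n k ↦ {ω | k + 1 ≤ R (n + (k + 1)) ω}
  have hEm (n k : ℕ) : MeasurableSet (E n k) := hmeas _ measurableSet_Ici
  have hEindep (n : ℕ) : iIndepSet (E n) P :=
    (hindep.precomp (g := fun k ↦ n + (k + 1)) fun a b h ↦ by simpa using h).iIndepSet_preimage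
      (fun _ ↦ hmeas _) (A := fun k ↦ Set.Ici (k + 1)) fun _ ↦ measurableSet_Ici
  have hElt (n k : ℕ) : P (E n k) < 1 := by
    have hsub : E n k ⊆ {ω | R (n + (k + 1)) ω < 1}ᶜ := fun ω (hω : k + 1 ≤ R (n + (k + 1)) ω)
      (hlt : R (n + (k + 1)) ω < 1) ↦ by omega
    calc P (E n k) ≤ P {ω | R (n + (k + 1)) ω < 1}ᶜ := measure_mono hsub
      _ = 1 - P {ω | R (n + (k + 1)) ω < 1} := prob_compl_eq_one_sub (hmeas _ measurableSet_Iio)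
      _ < 1 := ENNReal.sub_lt_self ENNReal.one_ne_top one_ne_zero (h0 _).ne'
  have hSE : S = ⋂ n, ⋃ k, E n k :=
    hS.trans <| Set.iInter_congr fun n ↦
      Set.iUnion_ge_eq_iUnion_nat_add (fun j ↦ {ω | j ≤ R (n + j) ω}) 1
  rw [hSE, measure_iInter_eq_one_iff fun n ↦ .iUnion (hEm n)]
  exact forall_congr' fun n ↦ ((hEindep n).measure_iUnion_eq_one_iff (hEm n) (hElt n)).symm

/-- **Heterogeneous Reverse Firework Process.**
`∑_{k=1}^∞ P(R_{n+k} ≥ k) = ∞` for all `n` if and only if `P(S) = 1`. -/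
theorem reverse_firework_heterogeneous_criterion
    {Ω : Type*} [MeasurableSpace Ω] (P : Measure Ω) [IsProbabilityMeasure P]
    (R : ℕ → Ω → ℕ)
    (hmeas : ∀ i, Measurable (R i))
    (hindep : iIndepFun R P)
    (h0 : ∀ n, 0 < P {ω | R n ω < 1}) (h1 : ∀ n, P {ω | R n ω < 1} < 1)
    (S : Set Ω)
    (hS : S = ⋂ (n : ℕ), ⋃ (j : ℕ) (_ : 1 ≤ j), {ω | j ≤ R (n + j) ω}) :
    (∀ n : ℕ, (∑' k : ℕ, P {ω | k + 1 ≤ R (n + (k + 1)) ω}) = ⊤) ↔ P S = 1 :=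
  reverse_firework_heterogeneous_criterion_general P R hmeas hindep h0 S hS
end

section
/- For the heterogeneous Reverse Firework Process, if ∑_{n=1}^{∞} ∏_{k=1}^{∞} P(R_{n+k} < k) < ∞, then P(S) > 0. -/
open MeasureTheory ProbabilityTheory Filter
open scoped ENNReal

/-!
A vertex `n` is *blocked* when no vertex to its right reaches it, i.e. `R (n + k) < k` for all
`k ≥ 1`; the process survives iff no vertex is blocked. By independence the probability that `n`
is blocked is at most `∏_k P(R_{n+k} < k)`, so by the summability hypothesis the blocking
probabilities beyond some `N` sum to less than `1`, and with positive probability no vertex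
beyond `N` is blocked. This tail event only involves `R_i` for `i > N + 1`, hence is independent
of the event that `R_i ≥ 1` for all `i ≤ N + 1`, which has positive probability and prevents
blocking at every `n ≤ N`.
-/

namespace MeasureTheory

lemma measure_iInter_compl_pos_of_tsum_lt_one {Ω ι : Type*} [MeasurableSpace Ω] [Countable ι]
    {P : Measure Ω} [IsProbabilityMeasure P] {A : ι → Set Ω} (h : ∑' i, P (A i) < 1) :
    0 < P (⋂ i, (A i)ᶜ) := by
  refine pos_iff_ne_zero.2 fun h0 => h.not_ge ?_
  calc 1 = P Set.univ := measure_univ.symm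
    _ ≤ P (⋂ i, (A i)ᶜ) + P (⋂ i, (A i)ᶜ)ᶜ := measure_univ_le_add_compl _
    _ = P (⋃ i, A i) := by simp only [h0, zero_add, Set.compl_iInter, compl_compl]
    _ ≤ ∑' i, P (A i) := measure_iUnion_le A

end MeasureTheory

namespace ProbabilityTheory

variable {Ω ι β : Type*} [mβ : MeasurableSpace β] {X : ι → Ω → β}

lemma measurableSet_biSup_comap_preimage {S : Set ι} {i : ι} (hi : i ∈ S) {A : Set β}
    (hA : MeasurableSet A) :
    MeasurableSet[⨆ j ∈ S, MeasurableSpace.comap (X j) mβ] (X i ⁻¹' A) :=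
  (le_iSup₂ (f := fun j (_ : j ∈ S) => MeasurableSpace.comap (X j) mβ) i hi :
    MeasurableSpace.comap (X i) mβ ≤ _) _ ⟨A, hA, rfl⟩

variable [MeasurableSpace Ω] {P : Measure Ω}

lemma iIndepFun.measure_iInter_preimage_le_tprod [IsZeroOrProbabilityMeasure P]
    (hX : iIndepFun X P) {A : ι → Set β} (hA : ∀ i, MeasurableSet (A i)) :
    P (⋂ i, X i ⁻¹' A i) ≤ ∏' i, P (X i ⁻¹' A i) := by
  rw [ENNReal.tprod_eq_iInf_prod fun _ => prob_le_one]
  refine le_iInf fun s => ?_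
  calc P (⋂ i, X i ⁻¹' A i) ≤ P (⋂ i ∈ s, X i ⁻¹' A i) :=
        measure_mono fun ω hω => Set.mem_iInter₂.2 fun i _ => Set.mem_iInter.1 hω i
    _ = ∏ i ∈ s, P (X i ⁻¹' A i) := hX.meas_biInter fun i _ => ⟨A i, hA i, rfl⟩

lemma iIndepFun.measure_biInter_preimage_pos (hX : iIndepFun X P) {s : Finset ι}
    {A : ι → Set β} (hA : ∀ i, MeasurableSet (A i)) (hpos : ∀ i ∈ s, 0 < P (X i ⁻¹' A i)) :
    0 < P (⋂ i ∈ s, X i ⁻¹' A i) := by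
  rw [hX.meas_biInter fun i _ => ⟨A i, hA i, rfl⟩]
  exact CanonicallyOrderedAdd.prod_pos.2 hpos

lemma iIndepFun.measure_inter_eq_mul_of_disjoint (hX : iIndepFun X P)
    (hmeas : ∀ i, Measurable (X i)) {S T : Set ι} (hST : Disjoint S T) {E F : Set Ω}
    (hE : MeasurableSet[⨆ i ∈ S, MeasurableSpace.comap (X i) mβ] E)
    (hF : MeasurableSet[⨆ i ∈ T, MeasurableSpace.comap (X i) mβ] F) :
    P (E ∩ F) = P E * P F :=
  (Indep_iff _ _ _).1
    (indep_iSup_of_disjoint (fun i => (hmeas i).comap_le) hX.iIndep hST) E F hE hF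

end ProbabilityTheory

namespace ReverseFirework

variable {Ω : Type*} {R : ℕ → Ω → ℕ}

def blockedAt (R : ℕ → Ω → ℕ) (n : ℕ) : Set Ω :=
  ⋂ k : ℕ, {ω | R (n + (k + 1)) ω < k + 1}

lemma iUnion_reach_eq_compl_blockedAt (n : ℕ) :
    ⋃ (j : ℕ) (_ : 1 ≤ j), {ω | j ≤ R (n + j) ω} = (blockedAt R n)ᶜ := by
  ext ω
  simp only [blockedAt, Set.mem_iUnion, Set.mem_ofPred_eq, exists_prop, Set.mem_compl_iff,
    Set.mem_iInter, not_forall, not_lt]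
  constructor
  · rintro ⟨j, hj, hreach⟩
    obtain ⟨k, rfl⟩ := Nat.exists_eq_add_of_le' hj
    exact ⟨k, hreach⟩
  · rintro ⟨k, hreach⟩
    exact ⟨k + 1, Nat.le_add_left 1 k, hreach⟩

lemma blockedAt_subset (n : ℕ) : blockedAt R n ⊆ {ω | R (n + 1) ω < 1} :=
  Set.iInter_subset_of_subset 0 le_rfl

lemma measure_blockedAt_le_tprod [MeasurableSpace Ω] {P : Measure Ω} [IsProbabilityMeasure P]
    (hR : iIndepFun R P) (n : ℕ) :
    P (blockedAt R n) ≤ ∏' k : ℕ, P {ω | R (n + (k + 1)) ω < k + 1} :=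
  (hR.precomp fun a b h => by omega).measure_iInter_preimage_le_tprod
    (A := fun k => Set.Iio (k + 1)) fun _ => measurableSet_Iio

lemma measurableSet_blockedAt [MeasurableSpace Ω] {m n : ℕ} (hmn : m ≤ n) :
    MeasurableSet[⨆ i ∈ Set.Ioi m, MeasurableSpace.comap (R i) inferInstance] (blockedAt R n) :=
  MeasurableSet.iInter fun k =>
    measurableSet_biSup_comap_preimage (X := R) (Set.mem_Ioi.2 (by omega)) measurableSet_Iio

lemma mem_iInter_compl_blockedAt {ω : Ω} {N : ℕ} (head : ∀ i ≤ N + 1, ¬R i ω < 1)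
    (tail : ∀ m, ω ∉ blockedAt R (m + N + 1)) : ω ∈ ⋂ n, (blockedAt R n)ᶜ := by
  refine Set.mem_iInter.2 fun n => ?_
  rcases le_or_gt n N with hn | hn
  · exact fun hb => head (n + 1) (by omega) (blockedAt_subset n hb)
  · simpa [show n - (N + 1) + N + 1 = n by omega] using tail (n - (N + 1))

end ReverseFirework

open ReverseFirework

theorem reverse_firework_heterogeneous_survival_general
    {Ω : Type*} [MeasurableSpace Ω] (P : Measure Ω) [IsProbabilityMeasure P]
    (R : ℕ → Ω → ℕ)
    (hmeas : ∀ i, Measurable (R i))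
    (hindep : iIndepFun R P)
    (h1 : ∀ n, P {ω | R n ω < 1} < 1)
    (S : Set Ω)
    (hS : S = ⋂ (n : ℕ), ⋃ (j : ℕ) (_ : 1 ≤ j), {ω | j ≤ R (n + j) ω})
    (hsum : (∑' n : ℕ, ∏' k : ℕ,
      P {ω | R ((n + 1) + (k + 1)) ω < k + 1}) ≠ ⊤) :
    0 < P S := by
  simp only [iUnion_reach_eq_compl_blockedAt] at hS
  have hblocked : ∑' n, P (blockedAt R (n + 1)) ≠ ⊤ :=
    ne_top_of_le_ne_top hsum (ENNReal.tsum_le_tsum fun n => measure_blockedAt_le_tprod hindep _)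
  obtain ⟨N, hN⟩ : ∃ N, ∑' m, P (blockedAt R (m + N + 1)) < 1 :=
    ((ENNReal.tendsto_sum_nat_add _ hblocked).eventually (gt_mem_nhds one_pos)).exists
  set head := ⋂ i ∈ Finset.Iic (N + 1), {ω | R i ω < 1}ᶜ
  set tail := ⋂ m, (blockedAt R (m + N + 1))ᶜ
  have hhead : 0 < P head := hindep.measure_biInter_preimage_pos
    (A := fun _ => (Set.Iio 1)ᶜ) (fun _ => measurableSet_Iio.compl) fun i _ => by
      rw [Set.preimage_compl, prob_compl_eq_one_sub (hmeas i measurableSet_Iio)]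
      exact tsub_pos_of_lt (h1 i)
  have htail : 0 < P tail := measure_iInter_compl_pos_of_tsum_lt_one hN
  have hindep_head_tail : P (head ∩ tail) = P head * P tail :=
    hindep.measure_inter_eq_mul_of_disjoint hmeas (Set.Iic_disjoint_Ioi le_rfl)
      (Finset.measurableSet_biInter _ fun i hi =>
        (measurableSet_biSup_comap_preimage (by simpa using hi) measurableSet_Iio).compl)
      (MeasurableSet.iInter fun m => (measurableSet_blockedAt (by omega)).compl)
  have hsurv : head ∩ tail ⊆ S := fun ω ⟨hωhead, hωtail⟩ => hS ▸
    mem_iInter_compl_blockedAt (fun i hi => Set.mem_iInter₂.1 hωhead i (by simpa using hi))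
      (Set.mem_iInter.1 hωtail)
  calc 0 < P head * P tail := ENNReal.mul_pos hhead.ne' htail.ne'
    _ = P (head ∩ tail) := hindep_head_tail.symm
    _ ≤ P S := measure_mono hsurv

/-- **Heterogeneous Reverse Firework Process.**
If `∑_{n=1}^∞ ∏_{k=1}^∞ P(R_{n+k} < k) < ∞` then `P(S) > 0`. -/
theorem reverse_firework_heterogeneous_survival
    {Ω : Type*} [MeasurableSpace Ω] (P : Measure Ω) [IsProbabilityMeasure P]
    (R : ℕ → Ω → ℕ)
    (hmeas : ∀ i, Measurable (R i))
    (hindep : iIndepFun R P)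
    (h0 : ∀ n, 0 < P {ω | R n ω < 1}) (h1 : ∀ n, P {ω | R n ω < 1} < 1)
    (S : Set Ω)
    (hS : S = ⋂ (n : ℕ), ⋃ (j : ℕ) (_ : 1 ≤ j), {ω | j ≤ R (n + j) ω})
    (hsum : (∑' n : ℕ, ∏' k : ℕ,
      P {ω | R ((n + 1) + (k + 1)) ω < k + 1}) ≠ ⊤) :
    0 < P S :=
  reverse_firework_heterogeneous_survival_general P R hmeas hindep h1 S hS hsum
end

section
/- For the heterogeneous Reverse Firework Process, P(S) ≥ ∏_{n=0}^{∞} [ 1 − ∏_{j=1}^{∞} (1 − P(R_{n+j} ≥ j)) ]. -/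
open MeasureTheory ProbabilityTheory Set
open scoped ENNReal

/-!
The events `A n = ⋃_{j ≥ 1} {j ≤ R (n + j)}` are increasing in the independent coordinates `R m`,
so by the Harris inequality they are positively correlated: `P (⋂ n, A n) ≥ ∏ n, P (A n)`, while
independence gives `P (A n) = 1 - ∏_{j ≥ 1} P (R (n + j) < j)`. For finitely many coordinates the
Harris inequality is proved by induction: conditioning on the last coordinate turns every event
into a monotone function of it, and Chebyshev's sum inequality correlates these. Continuity of
measure then passes to infinitely many coordinates and events.
-/

namespace ENNReal

lemma mul_add_mul_le_mul_add_mul {a b c d : ℝ≥0∞} (hab : a ≤ b) (hcd : c ≤ d) :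
    a * d + b * c ≤ a * c + b * d := by
  obtain ⟨b, rfl⟩ := exists_add_of_le hab
  obtain ⟨d, rfl⟩ := exists_add_of_le hcd
  calc a * (c + d) + (a + b) * c = a * c + (a * d + b * c + a * c) := by ring
    _ ≤ a * c + (a * d + b * c + a * c) + b * d := le_self_add
    _ = a * c + (a + b) * (c + d) := by ring

theorem tsum_mul_tsum_le_tsum_mul_tsum_of_monotone {α : Type*} [LinearOrder α] (w : α → ℝ≥0∞)
    {f g : α → ℝ≥0∞} (hf : Monotone f) (hg : Monotone g) :
    (∑' x, w x * f x) * ∑' x, w x * g x ≤ (∑' x, w x) * ∑' x, w x * (f x * g x) := by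
  have expand (u v : α → ℝ≥0∞) : (∑' x, w x * u x) * ∑' y, w y * v y
      = ∑' x, ∑' y, w x * w y * (u x * v y) := by
    rw [← ENNReal.tsum_mul_right]
    refine tsum_congr fun x => ?_
    rw [← ENNReal.tsum_mul_left]
    exact tsum_congr fun y => by ring
  have swap (F : α → α → ℝ≥0∞) :
      ∑' x, ∑' y, w x * w y * F y x = ∑' x, ∑' y, w x * w y * F x y := by
    rw [ENNReal.tsum_comm]
    exact tsum_congr fun x => tsum_congr fun y => by ring
  have double (F G : α → α → ℝ≥0∞) (hFG : ∀ x y, G x y = F y x) :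
      ∑' x, ∑' y, w x * w y * (F x y + G x y) = 2 * ∑' x, ∑' y, w x * w y * F x y := by
    simp only [hFG, mul_add, ENNReal.tsum_add, swap F, two_mul]
  have rearrange (x y : α) : f x * g y + f y * g x ≤ f x * g x + f y * g y := by
    rcases le_total x y with hxy | hyx
    · exact mul_add_mul_le_mul_add_mul (hf hxy) (hg hxy)
    · rw [add_comm (f x * g y), add_comm (f x * g x)]
      exact mul_add_mul_le_mul_add_mul (hf hyx) (hg hyx)
  -- double both sides and symmetrise over pairs `(x, y)`
  rw [← ENNReal.mul_le_mul_iff_right two_ne_zero ofNat_ne_top]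
  calc 2 * ((∑' x, w x * f x) * ∑' x, w x * g x)
      = ∑' x, ∑' y, w x * w y * (f x * g y + f y * g x) := by
        rw [expand, double _ _ fun _ _ => rfl]
    _ ≤ ∑' x, ∑' y, w x * w y * (f x * g x + f y * g y) :=
        ENNReal.tsum_le_tsum fun x => ENNReal.tsum_le_tsum fun y =>
          mul_le_mul' le_rfl (rearrange x y)
    _ = 2 * ((∑' x, w x) * ∑' x, w x * (f x * g x)) := by
        have := expand (fun x => f x * g x) fun _ => 1
        simp only [mul_one] at this
        rw [double (fun x _ => f x * g x) _ fun _ _ => rfl, mul_comm (∑' x, w x), this]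

theorem prod_tsum_mul_le_tsum_mul_prod_of_monotone {α ι : Type*} [LinearOrder α]
    {w : α → ℝ≥0∞} (hw : ∑' x, w x = 1) {h : ι → α → ℝ≥0∞} {s : Finset ι}
    (hh : ∀ n ∈ s, Monotone (h n)) :
    ∏ n ∈ s, ∑' x, w x * h n x ≤ ∑' x, w x * ∏ n ∈ s, h n x := by
  classical
  induction s using Finset.induction_on with
  | empty => simp [hw]
  | insert a s ha ih =>
    have hprod : Monotone fun x => ∏ n ∈ s, h n x := fun x y hxy =>
      Finset.prod_le_prod' fun n hn => hh n (Finset.mem_insert_of_mem hn) hxy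
    calc ∏ n ∈ insert a s, ∑' x, w x * h n x
        = (∑' x, w x * h a x) * ∏ n ∈ s, ∑' x, w x * h n x := Finset.prod_insert ha
      _ ≤ (∑' x, w x * h a x) * ∑' x, w x * ∏ n ∈ s, h n x := by
        gcongr
        exact ih fun n hn => hh n (Finset.mem_insert_of_mem hn)
      _ ≤ (∑' x, w x) * ∑' x, w x * (h a x * ∏ n ∈ s, h n x) :=
        tsum_mul_tsum_le_tsum_mul_tsum_of_monotone w (hh a (Finset.mem_insert_self a s)) hprod
      _ = ∑' x, w x * ∏ n ∈ insert a s, h n x := by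
        simp only [hw, one_mul, Finset.prod_insert ha]

end ENNReal

lemma MeasureTheory.measure_eq_tsum_inter_preimage_singleton {Ω β : Type*} [MeasurableSpace Ω]
    [MeasurableSpace β] [Countable β] [MeasurableSingletonClass β] (μ : Measure Ω) {f : Ω → β}
    (hf : Measurable f) (E : Set Ω) : μ E = ∑' x, μ (E ∩ f ⁻¹' {x}) := by
  have hcover : ⋃ x, f ⁻¹' {x} = univ := by ext; simp
  calc μ E = μ.restrict E (⋃ x, f ⁻¹' {x}) := by rw [hcover, Measure.restrict_apply_univ]
    _ = ∑' x, μ (E ∩ f ⁻¹' {x}) := by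
      rw [measure_iUnion (fun x y hxy => (disjoint_singleton.2 hxy).preimage f)
        fun x => hf (measurableSet_singleton x)]
      exact tsum_congr fun x => by
        rw [Measure.restrict_apply (hf (measurableSet_singleton x)), inter_comm]

namespace ProbabilityTheory

variable {Ω ι : Type*} {R : ℕ → Ω → ℕ}

/-- A threshold `t m = ⊤` is never reached, so it switches coordinate `m` off. -/
def exceedance (R : ℕ → Ω → ℕ) (t : ℕ → ℕ∞) (M : ℕ) : Set Ω := ⋃ m < M, {ω | t m ≤ R m ω}

lemma exceedance_zero (R : ℕ → Ω → ℕ) (t : ℕ → ℕ∞) : exceedance R t 0 = ∅ := by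
  simp [exceedance]

lemma mem_exceedance_succ {t : ℕ → ℕ∞} {M : ℕ} {ω : Ω} :
    ω ∈ exceedance R t (M + 1) ↔ ω ∈ exceedance R t M ∨ t M ≤ R M ω := by
  simp only [exceedance, mem_iUnion, mem_ofPred_eq, exists_prop, Nat.lt_succ_iff_lt_or_eq,
    or_and_right, exists_or, exists_eq_left]

lemma exceedance_mono (R : ℕ → Ω → ℕ) (t : ℕ → ℕ∞) : Monotone (exceedance R t) :=
  fun _ _ hMM' => biUnion_subset_biUnion_left fun _ hm => lt_of_lt_of_le hm hMM'

variable [MeasurableSpace Ω] {P : Measure Ω}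

lemma measurableSet_exceedance (hmeas : ∀ m, Measurable (R m)) (t : ℕ → ℕ∞) (M : ℕ) :
    MeasurableSet (exceedance R t M) :=
  .biUnion (to_countable _) fun m _ => hmeas m (.of_discrete (s := {x : ℕ | t m ≤ x}))

lemma iIndepFun.measure_biInter_exceedance_inter_preimage (hmeas : ∀ m, Measurable (R m))
    (hindep : iIndepFun R P) (t : ι → ℕ → ℕ∞) (s : Finset ι) (M : ℕ) (B : Set ℕ) :
    P ((⋂ n ∈ s, exceedance R (t n) M) ∩ R M ⁻¹' B)
      = P (⋂ n ∈ s, exceedance R (t n) M) * P (R M ⁻¹' B) := by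
  have hpast : Indep (⨆ m ∈ Iio M, MeasurableSpace.comap (R m) inferInstance)
      (⨆ m ∈ ({M} : Set ℕ), MeasurableSpace.comap (R m) inferInstance) P :=
    indep_iSup_of_disjoint (fun m => (hmeas m).comap_le) hindep.iIndep (by simp)
  refine (Indep_iff _ _ _).1 hpast _ _ ?_ ?_
  · refine .biInter (to_countable _) fun n _ => .biUnion (to_countable _) fun m hm => ?_
    exact le_iSup₂ (f := fun m (_ : m ∈ Iio M) => MeasurableSpace.comap (R m) inferInstance) m hm
      _ ⟨{x : ℕ | t n m ≤ x}, trivial, rfl⟩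
  · exact le_iSup₂ (f := fun m (_ : m ∈ ({M} : Set ℕ)) =>
      MeasurableSpace.comap (R m) inferInstance) M rfl _ ⟨_, trivial, rfl⟩

lemma iIndepFun.measure_biInter_exceedance_succ (hmeas : ∀ m, Measurable (R m))
    (hindep : iIndepFun R P) (t : ι → ℕ → ℕ∞) (s : Finset ι) (M : ℕ) :
    P (⋂ n ∈ s, exceedance R (t n) (M + 1))
      = ∑' x : ℕ, P (R M ⁻¹' {x}) *
          P (⋂ n ∈ s.filter fun n => (x : ℕ∞) < t n M, exceedance R (t n) M) := by
  have hfiber (x : ℕ) : (⋂ n ∈ s, exceedance R (t n) (M + 1)) ∩ R M ⁻¹' {x}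
      = (⋂ n ∈ s.filter fun n => (x : ℕ∞) < t n M, exceedance R (t n) M) ∩ R M ⁻¹' {x} := by
    ext ω
    simp only [mem_inter_iff, mem_iInter, mem_preimage, mem_singleton_iff, Finset.mem_filter,
      mem_exceedance_succ, and_congr_left_iff]
    rintro rfl
    refine forall_congr' fun n => ?_
    rw [and_imp, ← not_le]
    exact imp_congr_right fun _ => or_iff_not_imp_right
  rw [measure_eq_tsum_inter_preimage_singleton P (hmeas M)]
  simp_rw [hfiber, hindep.measure_biInter_exceedance_inter_preimage hmeas, mul_comm]

theorem iIndepFun.prod_measure_exceedance_le [IsProbabilityMeasure P]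
    (hmeas : ∀ m, Measurable (R m)) (hindep : iIndepFun R P) (t : ι → ℕ → ℕ∞) (M : ℕ)
    (s : Finset ι) :
    ∏ n ∈ s, P (exceedance R (t n) M) ≤ P (⋂ n ∈ s, exceedance R (t n) M) := by
  induction M generalizing s with
  | zero =>
    rcases s.eq_empty_or_nonempty with rfl | ⟨n, hn⟩
    · simp
    · rw [Finset.prod_eq_zero hn (by simp [exceedance_zero])]
      exact zero_le
  | succ M ih =>
    set w : ℕ → ℝ≥0∞ := fun x => P (R M ⁻¹' {x})
    -- the probability of `exceedance R (t n) (M + 1)` given `R M = x`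
    set h : ι → ℕ → ℝ≥0∞ := fun n x => if (x : ℕ∞) < t n M then P (exceedance R (t n) M) else 1
    have hw : ∑' x, w x = 1 := by
      simpa using (measure_eq_tsum_inter_preimage_singleton P (hmeas M) univ).symm
    have hh (n : ι) : Monotone (h n) := by
      intro x y hxy
      simp only [h]
      split_ifs with hx hy hy
      · exact le_rfl
      · exact prob_le_one
      · exact absurd (lt_of_le_of_lt (by exact_mod_cast hxy) hy) hx
      · exact le_rfl
    have hsingle (n : ι) : P (exceedance R (t n) (M + 1)) = ∑' x, w x * h n x := by
      rw [← Finset.set_biInter_singleton n fun n => exceedance R (t n) (M + 1),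
        hindep.measure_biInter_exceedance_succ hmeas t {n} M]
      refine tsum_congr fun x => ?_
      by_cases hx : (x : ℕ∞) < t n M <;> simp [w, h, hx, Finset.filter_singleton]
    calc ∏ n ∈ s, P (exceedance R (t n) (M + 1))
        = ∏ n ∈ s, ∑' x, w x * h n x := Finset.prod_congr rfl fun n _ => hsingle n
      _ ≤ ∑' x, w x * ∏ n ∈ s, h n x :=
        ENNReal.prod_tsum_mul_le_tsum_mul_prod_of_monotone hw fun n _ => hh n
      _ ≤ ∑' x, w x * P (⋂ n ∈ s.filter fun n => (x : ℕ∞) < t n M, exceedance R (t n) M) := by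
        gcongr with x
        rw [← Finset.prod_filter]
        exact ih _
      _ = P (⋂ n ∈ s, exceedance R (t n) (M + 1)) :=
        (hindep.measure_biInter_exceedance_succ hmeas t s M).symm

theorem iIndepFun.prod_measure_iUnion_exceedance_le [IsProbabilityMeasure P]
    (hmeas : ∀ m, Measurable (R m)) (hindep : iIndepFun R P) (t : ι → ℕ → ℕ∞) (s : Finset ι) :
    ∏ n ∈ s, P (⋃ M, exceedance R (t n) M) ≤ P (⋂ n ∈ s, ⋃ M, exceedance R (t n) M) :=
  le_of_tendsto' (ENNReal.tendsto_finsetProd_of_ne_top s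
      (fun n _ => tendsto_measure_iUnion_atTop (exceedance_mono R (t n)))
      fun _ _ => measure_ne_top P _)
    fun M => (hindep.prod_measure_exceedance_le hmeas t M s).trans
      (measure_mono (iInter₂_mono fun n _ => subset_iUnion (exceedance R (t n)) M))

theorem iIndepFun.measure_iInter_preimage_eq_tprod [IsProbabilityMeasure P] {β : Type*}
    [MeasurableSpace β] [Countable ι] {X : ι → Ω → β} (hindep : iIndepFun X P)
    (hmeas : ∀ i, Measurable (X i)) {B : ι → Set β} (hB : ∀ i, MeasurableSet (B i)) :
    P (⋂ i, X i ⁻¹' B i) = ∏' i, P (X i ⁻¹' B i) := by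
  have hanti : Antitone fun F : Finset ι => ⋂ i ∈ F, X i ⁻¹' B i :=
    fun _ _ hFG => biInter_subset_biInter_left hFG
  have hmeasF (F : Finset ι) : NullMeasurableSet (⋂ i ∈ F, X i ⁻¹' B i) P :=
    (MeasurableSet.biInter F.countable_toSet fun i _ => hmeas i (hB i)).nullMeasurableSet
  rw [iInter_eq_iInter_finset, hanti.directed_ge.measure_iInter hmeasF ⟨∅, measure_ne_top P _⟩,
    ENNReal.tprod_eq_iInf_prod fun _ => prob_le_one]
  exact iInf_congr fun F => hindep.measure_inter_preimage_eq_mul F fun i _ => hB i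

theorem iIndepFun.measure_iUnion_exceedance [IsProbabilityMeasure P]
    (hmeas : ∀ m, Measurable (R m)) (hindep : iIndepFun R P) (t : ℕ → ℕ∞) :
    P (⋃ M, exceedance R t M) = 1 - ∏' m, P {ω | R m ω < t m} := by
  have hcompl : (⋃ M, exceedance R t M)ᶜ = ⋂ m, R m ⁻¹' {x | (x : ℕ∞) < t m} := by
    ext ω
    simp only [exceedance, compl_iUnion, mem_iInter, mem_compl_iff, mem_ofPred_eq, not_le,
      mem_preimage]
    exact ⟨fun h m => h (m + 1) m (Nat.lt_succ_self m), fun h _ m _ => h m⟩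
  calc P (⋃ M, exceedance R t M) = 1 - P (⋃ M, exceedance R t M)ᶜ := by
        rw [prob_compl_eq_one_sub (.iUnion fun M => measurableSet_exceedance hmeas t M),
          ENNReal.sub_sub_cancel ENNReal.one_ne_top prob_le_one]
    _ = 1 - ∏' m, P {ω | R m ω < t m} := by
        rw [hcompl]
        exact congrArg (1 - ·) (hindep.measure_iInter_preimage_eq_tprod hmeas fun _ => .of_discrete)

theorem tprod_measure_le_measure_iInter [IsProbabilityMeasure P] {A : ℕ → Set Ω}
    (hA : ∀ n, MeasurableSet (A n)) (h : ∀ s : Finset ℕ, ∏ n ∈ s, P (A n) ≤ P (⋂ n ∈ s, A n)) :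
    ∏' n, P (A n) ≤ P (⋂ n, A n) := by
  refine ge_of_tendsto' (tendsto_measure_iInter_le (fun n => (hA n).nullMeasurableSet)
    ⟨0, measure_ne_top P _⟩) fun N => ?_
  calc ∏' n, P (A n) ≤ ∏ n ∈ Finset.Iic N, P (A n) := by
        rw [ENNReal.tprod_eq_iInf_prod fun _ => prob_le_one]
        exact iInf_le _ _
    _ ≤ P (⋂ n ∈ Finset.Iic N, A n) := h _
    _ = P (⋂ n ≤ N, A n) := by simp only [Finset.mem_Iic]

end ProbabilityTheory

def fireworkThreshold (n m : ℕ) : ℕ∞ := if n < m then (m - n : ℕ) else ⊤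

lemma iUnion_exceedance_fireworkThreshold {Ω : Type*} (R : ℕ → Ω → ℕ) (n : ℕ) :
    ⋃ M, exceedance R (fireworkThreshold n) M = ⋃ (j : ℕ) (_ : 1 ≤ j), {ω | j ≤ R (n + j) ω} := by
  ext ω
  simp only [exceedance, fireworkThreshold, mem_iUnion, mem_ofPred_eq, exists_prop]
  constructor
  · rintro ⟨M, m, -, h⟩
    split_ifs at h with hnm
    · exact ⟨m - n, by omega, by rw [Nat.add_sub_cancel' hnm.le]; exact_mod_cast h⟩
    · exact absurd h (by simp)
  · rintro ⟨j, hj, h⟩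
    exact ⟨n + j + 1, n + j, by omega, by rw [if_pos (by omega)]; simpa using h⟩

lemma tprod_measure_lt_fireworkThreshold {Ω : Type*} [MeasurableSpace Ω] {P : Measure Ω}
    [IsProbabilityMeasure P] {R : ℕ → Ω → ℕ} (hmeas : ∀ m, Measurable (R m)) (n : ℕ) :
    ∏' m, P {ω | R m ω < fireworkThreshold n m}
      = ∏' j, (1 - P {ω | j + 1 ≤ R (n + (j + 1)) ω}) := by
  have hinj : Function.Injective fun j => n + (j + 1) := fun _ _ h => by simpa using h
  rw [← hinj.tprod_eq (f := fun m => P {ω | R m ω < fireworkThreshold n m})]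
  · refine tprod_congr fun j => ?_
    have hcompl : {ω | (R (n + (j + 1)) ω : ℕ∞) < fireworkThreshold n (n + (j + 1))}
        = {ω | j + 1 ≤ R (n + (j + 1)) ω}ᶜ := by
      ext ω
      simp only [fireworkThreshold, if_pos (Nat.lt_add_of_pos_right j.succ_pos),
        Nat.add_sub_cancel_left, mem_ofPred_eq, mem_compl_iff, not_le]
      exact_mod_cast Iff.rfl
    have hmeas_ge : MeasurableSet {ω | j + 1 ≤ R (n + (j + 1)) ω} :=
      hmeas _ (.of_discrete (s := {x | j + 1 ≤ x}))
    rw [hcompl, prob_compl_eq_one_sub hmeas_ge]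
  · intro m hm
    by_contra hrange
    have hmn : ¬ n < m := fun h => hrange ⟨m - n - 1, by simp only; omega⟩
    exact hm (by simp [fireworkThreshold, hmn])

theorem reverse_firework_heterogeneous_lower_bound_general
    {Ω : Type*} [MeasurableSpace Ω] (P : Measure Ω) [IsProbabilityMeasure P]
    (R : ℕ → Ω → ℕ)
    (hmeas : ∀ i, Measurable (R i))
    (hindep : iIndepFun R P)
    (S : Set Ω)
    (hS : S = ⋂ (n : ℕ), ⋃ (j : ℕ) (_ : 1 ≤ j), {ω | j ≤ R (n + j) ω}) :
    P S ≥ ∏' n : ℕ, (1 - ∏' j : ℕ, (1 - P {ω | j + 1 ≤ R (n + (j + 1)) ω})) := by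
  have hA (n : ℕ) : 1 - ∏' j, (1 - P {ω | j + 1 ≤ R (n + (j + 1)) ω})
      = P (⋃ M, exceedance R (fireworkThreshold n) M) := by
    rw [hindep.measure_iUnion_exceedance hmeas, tprod_measure_lt_fireworkThreshold hmeas]
  simp_rw [ge_iff_le, hS, hA, ← iUnion_exceedance_fireworkThreshold]
  exact tprod_measure_le_measure_iInter
    (fun n => .iUnion fun M => measurableSet_exceedance hmeas _ M)
    (hindep.prod_measure_iUnion_exceedance_le hmeas _)

/-- **Heterogeneous Reverse Firework Process.**
`P(S) ≥ ∏_{n=0}^∞ [1 − ∏_{j=1}^∞ (1 − P(R_{n+j} ≥ j))]`. -/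
theorem reverse_firework_heterogeneous_lower_bound
    {Ω : Type*} [MeasurableSpace Ω] (P : Measure Ω) [IsProbabilityMeasure P]
    (R : ℕ → Ω → ℕ)
    (hmeas : ∀ i, Measurable (R i))
    (hindep : iIndepFun R P)
    (h0 : ∀ n, 0 < P {ω | R n ω < 1}) (h1 : ∀ n, P {ω | R n ω < 1} < 1)
    (S : Set Ω)
    (hS : S = ⋂ (n : ℕ), ⋃ (j : ℕ) (_ : 1 ≤ j), {ω | j ≤ R (n + j) ω}) :
    P S ≥ ∏' n : ℕ, (1 - ∏' j : ℕ, (1 - P {ω | j + 1 ≤ R (n + (j + 1)) ω})) :=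
  reverse_firework_heterogeneous_lower_bound_general P R hmeas hindep S hS
end

section
/- Let (b_n)_{n∈ℕ} be a non-increasing sequence of reals with 0 < b_n, b_0 < 1, b_n → 0, ∑_{n=0}^{∞} b_n = ∞ and n·b_n → 0 as n → ∞. Consider the heterogeneous Firework Process with positions u_i = i in which the independent ℕ-valued radii (R_n) have distributions P(R_n = 0) = 1 − b_n and P(R_n = k) = b_{n+k−1} − b_{n+k} for k ≥ 1. Then every R_n has infinite expectation (∑_{j=1}^{∞} P(R_n ≥ j) = ∞ for all n), and yet P(V) = 0. -/
/-!
The distribution of `R_n` is chosen so that its tails telescope: `P(R_n ≥ j + 1) = b_{n+j}`.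
Hence `E R_n = ∑_j b_{n+j} = ∞`. On the other hand, reaching vertex `n + 1` requires some
`i ≤ n` with `R_i ≥ n + 1 - i`, and each of these `n + 1` events has probability exactly `b_n`;
the union bound gives `P(V) ≤ (n + 1) b_n → 0`.
-/

open MeasureTheory ProbabilityTheory Filter Finset
open scoped ENNReal

section TailProbabilities

variable {Ω : Type*} [MeasurableSpace Ω] {μ : Measure Ω} {X : Ω → ℕ} {c : ℕ → ℝ}

lemma measureReal_setOf_succ_le_eq [IsProbabilityMeasure μ] (hX : Measurable X)
    (h0 : μ.real {ω | X ω = 0} = 1 - c 0)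
    (hsucc : ∀ k, μ.real {ω | X ω = k + 1} = c k - c (k + 1)) (j : ℕ) :
    μ.real {ω | j + 1 ≤ X ω} = c j := by
  have hlevel : ∀ k, MeasurableSet {ω | X ω = k} := fun k => hX (measurableSet_singleton k)
  induction j with
  | zero =>
    have hcompl : {ω | 0 + 1 ≤ X ω} = {ω | X ω = 0}ᶜ := by
      ext ω; simp [Nat.one_le_iff_ne_zero]
    rw [hcompl, probReal_compl_eq_one_sub (hlevel 0), h0]
    ring
  | succ j ih =>
    have hsplit : {ω | j + 1 ≤ X ω} = {ω | j + 1 + 1 ≤ X ω} ∪ {ω | X ω = j + 1} := by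
      ext ω; simp only [Set.mem_ofPred_eq, Set.mem_union]; omega
    have hdisj : Disjoint {ω | j + 1 + 1 ≤ X ω} {ω | X ω = j + 1} :=
      Set.disjoint_left.mpr fun ω h h' => by simp only [Set.mem_ofPred_eq] at h h'; omega
    rw [hsplit, measureReal_union hdisj (hlevel _), hsucc] at ih
    linarith

lemma tsum_measure_setOf_succ_le_eq_top
    (htail : ∀ j, μ.real {ω | j + 1 ≤ X ω} = c j) (hc : ¬ Summable c) :
    ∑' j, μ {ω | j + 1 ≤ X ω} = ∞ := by
  by_contra hfin
  exact hc (by simpa only [← measureReal_def, htail] using ENNReal.summable_toReal hfin)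

end TailProbabilities

lemma measure_eq_zero_of_measureReal_le_of_tendsto {Ω : Type*} [MeasurableSpace Ω]
    {μ : Measure Ω} [IsFiniteMeasure μ] {s : Set Ω} {ε : ℕ → ℝ}
    (hle : ∀ n, μ.real s ≤ ε n) (hε : Tendsto ε atTop (nhds 0)) : μ s = 0 :=
  (measureReal_eq_zero_iff).mp (le_antisymm (ge_of_tendsto' hε hle) measureReal_nonneg)

theorem firework_heterogeneous_example_infinite_expectation_death_general
    {Ω : Type*} [MeasurableSpace Ω] (P : Measure Ω) [IsProbabilityMeasure P]
    (b : ℕ → ℝ)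
    (hblim : Tendsto b atTop (nhds 0))
    (hbsum : ¬ Summable b)
    (hbn : Tendsto (fun n : ℕ => (n : ℝ) * b n) atTop (nhds 0))
    (R : ℕ → Ω → ℕ)
    (hmeas : ∀ i, Measurable (R i))
    (hd0 : ∀ n, (P {ω | R n ω = 0}).toReal = 1 - b n)
    (hdk : ∀ n k : ℕ, (P {ω | R n ω = k + 1}).toReal = b (n + k) - b (n + k + 1))
    (V : Set Ω)
    (hV : V = ⋂ (n : ℕ) (_ : 1 ≤ n), ⋃ i ∈ Finset.range n,
      {ω | n - i ≤ R i ω}) :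
    (∀ n : ℕ, (∑' j : ℕ, P {ω | j + 1 ≤ R n ω}) = ⊤) ∧ P V = 0 := by
  have htail : ∀ n j, P.real {ω | j + 1 ≤ R n ω} = b (n + j) := fun n =>
    measureReal_setOf_succ_le_eq (c := fun k => b (n + k)) (hmeas n) (hd0 n) (hdk n)
  refine ⟨fun n => tsum_measure_setOf_succ_le_eq_top (htail n) ?_, ?_⟩
  · simpa only [add_comm n, summable_nat_add_iff] using hbsum
  · have hcover : ∀ n : ℕ, P.real V ≤ (n + 1) * b n := fun n => calc
      P.real V ≤ P.real (⋃ i ∈ range (n + 1), {ω | n + 1 - i ≤ R i ω}) :=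
        measureReal_mono (hV ▸ Set.iInter₂_subset (n + 1) n.succ_pos) (measure_ne_top P _)
      _ ≤ ∑ i ∈ range (n + 1), P.real {ω | n + 1 - i ≤ R i ω} :=
        measureReal_biUnion_finset_le _ _
      _ = (n + 1) * b n := by
        rw [sum_congr rfl fun i hi => ?_, sum_const, card_range, nsmul_eq_mul, Nat.cast_succ]
        have hi : i ≤ n := Nat.lt_succ_iff.mp (mem_range.mp hi)
        rw [show n + 1 - i = n - i + 1 by omega, htail, Nat.add_sub_cancel' hi]
    exact measure_eq_zero_of_measureReal_le_of_tendsto hcover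
      (by simpa [add_mul] using hbn.add hblim)

/-- **Example (heterogeneous Firework Process).** With `P(R_n = 0) = 1 - b_n` and
`P(R_n = k) = b_{n+k-1} - b_{n+k}` for `k ≥ 1`, where `(b_n)` is non-increasing,
`0 < b_n`, `b_0 < 1`, `b_n → 0`, `∑ b_n = ∞` and `n·b_n → 0`, every `R_n` has
infinite expectation and yet `P(V) = 0`. -/
theorem firework_heterogeneous_example_infinite_expectation_death
    {Ω : Type*} [MeasurableSpace Ω] (P : Measure Ω) [IsProbabilityMeasure P]
    (b : ℕ → ℝ) (hbmono : Antitone b) (hbpos : ∀ n, 0 < b n) (hb0 : b 0 < 1)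
    (hblim : Tendsto b atTop (nhds 0))
    (hbsum : ¬ Summable b)
    (hbn : Tendsto (fun n : ℕ => (n : ℝ) * b n) atTop (nhds 0))
    (R : ℕ → Ω → ℕ)
    (hmeas : ∀ i, Measurable (R i))
    (hindep : iIndepFun R P)
    (hd0 : ∀ n, (P {ω | R n ω = 0}).toReal = 1 - b n)
    (hdk : ∀ n k : ℕ, (P {ω | R n ω = k + 1}).toReal = b (n + k) - b (n + k + 1))
    (V : Set Ω)
    (hV : V = ⋂ (n : ℕ) (_ : 1 ≤ n), ⋃ i ∈ Finset.range n,
      {ω | n - i ≤ R i ω}) :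
    (∀ n : ℕ, (∑' j : ℕ, P {ω | j + 1 ≤ R n ω}) = ⊤) ∧ P V = 0 :=
  firework_heterogeneous_example_infinite_expectation_death_general P b hblim hbsum hbn R hmeas hd0
    hdk V hV
end
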